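/- arXiv:2409.11684 — 2 statements merged into one kernel-verified Lean document; each statement's English description precedes it below -/
import Mathlib

section
/- For the stochastic interpolant x_s = α(s)x_0 + β(s)x_1 + γ(s)z with γ(s) > 0 and z ~ N(0,I) independent of (x_0, x_1), the marginal density ρ_s of x_s satisfies ∇ log ρ_s(x) = −γ(s)^{-1} E[z | x_s = x]. -/
open MeasureTheory Real

/-- Density of `N(0, σ² I_d)` on `ℝ^d`. -/
noncomputable def gaussDens (d : ℕ) (σ : ℝ) (x : EuclideanSpace ℝ (Fin d)) : ℝ :=
  (2 * π * σ^2) ^ (-(d:ℝ)/2) * Real.exp (-‖x‖^2 / (2 * σ^2))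

section Aux

variable {d : ℕ} {σ : ℝ}

lemma gauss_nonneg (hσ : 0 < σ) (u : EuclideanSpace ℝ (Fin d)) : 0 ≤ gaussDens d σ u := by
  unfold gaussDens
  positivity

lemma gauss_le (hσ : 0 < σ) (u : EuclideanSpace ℝ (Fin d)) :
    gaussDens d σ u ≤ (2 * π * σ^2) ^ (-(d:ℝ)/2) := by
  unfold gaussDens
  have h1 : Real.exp (-‖u‖^2 / (2 * σ^2)) ≤ 1 := by
    rw [Real.exp_le_one_iff]
    apply div_nonpos_of_nonpos_of_nonneg
    · simp [sq_nonneg]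
    · positivity
  have h2 : (0:ℝ) ≤ (2 * π * σ^2) ^ (-(d:ℝ)/2) := by positivity
  nlinarith

lemma r_exp_le (hσ : 0 < σ) {r : ℝ} (hr : 0 ≤ r) :
    r * Real.exp (-r^2 / (2 * σ^2)) ≤ 2 * σ := by
  rcases le_or_gt r (2*σ) with h | h
  · have h1 : Real.exp (-r^2 / (2 * σ^2)) ≤ 1 := by
      rw [Real.exp_le_one_iff]
      apply div_nonpos_of_nonpos_of_nonneg
      · simp [sq_nonneg]
      · positivity
    nlinarith
  · have hrpos : 0 < r := lt_trans (by positivity) h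
    have h1 : r^2 / (2*σ^2) ≤ Real.exp (r^2 / (2*σ^2)) := (Real.add_one_le_exp _).trans' (by nlinarith)
    have h2 : Real.exp (-r^2 / (2 * σ^2)) = (Real.exp (r^2 / (2*σ^2)))⁻¹ := by
      rw [← Real.exp_neg]; ring_nf
    have h3 : Real.exp (-r^2 / (2 * σ^2)) ≤ (r^2/(2*σ^2))⁻¹ := by
      rw [h2]
      apply inv_anti₀
      · positivity
      · exact h1
    have h4 : (r^2/(2*σ^2))⁻¹ = 2*σ^2/r^2 := by field_simp
    have h5 : r * (2*σ^2/r^2) ≤ 2*σ := by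
      rw [div_le_iff₀ (by positivity)] at *
      have : r * (2 * σ^2 / r^2) = 2*σ^2/r := by field_simp
      rw [this, div_le_iff₀ hrpos]
      nlinarith
    nlinarith [Real.exp_pos (-r^2/(2*σ^2))]

lemma gauss_mul_norm_le (hσ : 0 < σ) (u : EuclideanSpace ℝ (Fin d)) :
    gaussDens d σ u * ‖u‖ ≤ (2 * π * σ^2) ^ (-(d:ℝ)/2) * (2 * σ) := by
  unfold gaussDens
  have hA : (0:ℝ) ≤ (2 * π * σ^2) ^ (-(d:ℝ)/2) := by positivity
  calc (2 * π * σ^2) ^ (-(d:ℝ)/2) * Real.exp (-‖u‖^2 / (2 * σ^2)) * ‖u‖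
      = (2 * π * σ^2) ^ (-(d:ℝ)/2) * (‖u‖ * Real.exp (-‖u‖^2 / (2 * σ^2))) := by ring
    _ ≤ (2 * π * σ^2) ^ (-(d:ℝ)/2) * (2 * σ) := by
        exact mul_le_mul_of_nonneg_left (r_exp_le hσ (norm_nonneg u)) hA

lemma gauss_continuous (hσ : 0 < σ) : Continuous (gaussDens d σ) := by
  unfold gaussDens
  exact continuous_const.mul (Real.continuous_exp.comp
    (((continuous_norm.pow 2).neg).div_const _))

lemma integrand_fderiv (hσ : 0 < σ) (pm : ℝ) (m x' : EuclideanSpace ℝ (Fin d)) :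
    HasFDerivAt (fun y => pm * gaussDens d σ (y - m))
      ((InnerProductSpace.toDual ℝ _)
        ((pm * gaussDens d σ (x' - m) * (-(σ^2)⁻¹)) • (x' - m))) x' := by
  set u := x' - m with hu
  have hσ2 : (σ:ℝ)^2 ≠ 0 := by positivity
  have h1 : HasFDerivAt (fun y : EuclideanSpace ℝ (Fin d) => ‖y‖^2)
      ((2:ℕ) • innerSL ℝ u) u := (hasStrictFDerivAt_norm_sq u).hasFDerivAt
  have h2 : HasFDerivAt (fun y : EuclideanSpace ℝ (Fin d) => -‖y‖^2 / (2*σ^2))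
      ((-(2*σ^2)⁻¹) • ((2:ℕ) • innerSL ℝ u)) u := by
    have := h1.const_mul (-(2*σ^2)⁻¹)
    have hf : (fun y : EuclideanSpace ℝ (Fin d) => -‖y‖^2 / (2*σ^2)) =
        fun y => -(2*σ^2)⁻¹ * ‖y‖^2 := by
      funext y
      rw [div_eq_mul_inv]; ring
    rw [hf]; exact this
  have h3 := h2.exp
  have h4 := h3.const_mul ((2 * π * σ^2) ^ (-(d:ℝ)/2))
  have h5 : HasFDerivAt (gaussDens d σ)
      (((2 * π * σ^2) ^ (-(d:ℝ)/2)) • (Real.exp (-‖u‖^2/(2*σ^2)) •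
        ((-(2*σ^2)⁻¹) • ((2:ℕ) • innerSL ℝ u)))) u := h4
  have ht : HasFDerivAt (fun y : EuclideanSpace ℝ (Fin d) => y - m)
      (ContinuousLinearMap.id ℝ _) x' := (hasFDerivAt_id x').sub_const m
  have h6 := (h5.comp x' ht).const_mul pm
  refine h6.congr_fderiv ?_
  symm
  ext y
  simp only [ContinuousLinearMap.smul_apply, ContinuousLinearMap.coe_comp',
    Function.comp_apply, ContinuousLinearMap.coe_id', id_eq, innerSL_apply_apply,
    InnerProductSpace.toDual_apply_apply, smul_eq_mul]
  rw [real_inner_smul_left]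
  unfold gaussDens
  field_simp
  ring

end Aux

/-- for the stochastic interpolant `x_s = α(s)x₀ + β(s)x₁ + γ(s)z` with
`γ(s) > 0` and `z ~ N(0, I_d)` independent of `(x₀, x₁)`, the marginal density `ρ_s` of
`x_s` — the convolution of the density `p` of `α(s)x₀ + β(s)x₁` with `N(0, γ(s)² I)`,
i.e. `ρ_s(x) = ∫ p(m) φ_{γ(s)}(x−m) dm` — satisfies the score identity
`∇ log ρ_s(x) = −γ(s)⁻¹ E[z | x_s = x]`, where the conditional expectation is the
regression function `(ρ_s x)⁻¹ • ∫ (p m φ_{γ(s)}(x−m)) • γ(s)⁻¹(x−m) dm`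
(since `z = γ(s)⁻¹(x_s − α(s)x₀ − β(s)x₁)`). -/
theorem stochastic_interpolant_score
    {d : ℕ} (s : ℝ) (α β γ : ℝ → ℝ) (hγ : 0 < γ s)
    (p : EuclideanSpace ℝ (Fin d) → ℝ)
    (hp_nonneg : ∀ m, 0 ≤ p m) (hp_int : Integrable p)
    (hp_prob : ∫ m, p m = 1)
    (ρ : EuclideanSpace ℝ (Fin d) → ℝ)
    (hρ : ∀ x, ρ x = ∫ m, p m * gaussDens d (γ s) (x - m))
    (condExpZ : EuclideanSpace ℝ (Fin d) → EuclideanSpace ℝ (Fin d))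
    (hcondExpZ : ∀ x, condExpZ x =
      (ρ x)⁻¹ • ∫ m, (p m * gaussDens d (γ s) (x - m)) • ((γ s)⁻¹ • (x - m)))
    (x : EuclideanSpace ℝ (Fin d)) (hρx : 0 < ρ x) :
    gradient (fun x' => Real.log (ρ x')) x = -(γ s)⁻¹ • condExpZ x := by
  set σ := γ s with hσdef
  have hσ : 0 < σ := hγ
  set A : ℝ := (2 * π * σ^2) ^ (-(d:ℝ)/2) with hAdef
  have hApos : 0 < A := by positivity
  set w : EuclideanSpace ℝ (Fin d) → EuclideanSpace ℝ (Fin d) → EuclideanSpace ℝ (Fin d) :=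
    fun x' m => (p m * gaussDens d σ (x' - m) * (-(σ^2)⁻¹)) • (x' - m) with hwdef
  have hgc : Continuous (gaussDens d σ) := gauss_continuous hσ
  have hFmeas : ∀ x' : EuclideanSpace ℝ (Fin d),
      AEStronglyMeasurable (fun m => p m * gaussDens d σ (x' - m)) volume := fun x' =>
    hp_int.aestronglyMeasurable.mul
      ((hgc.comp (continuous_const.sub continuous_id)).aestronglyMeasurable)
  have hwmeas : ∀ x', AEStronglyMeasurable (w x') volume := fun x' =>
    ((hFmeas x').mul_const _).smul
      ((continuous_const.sub continuous_id).aestronglyMeasurable)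
  have hwbound : ∀ x' m, ‖w x' m‖ ≤ (A * (2*σ) * (σ^2)⁻¹) * p m := by
    intro x' m
    have h1 := gauss_mul_norm_le hσ (u := x' - m)
    have hg0 := gauss_nonneg hσ (u := x' - m)
    have hinv : (0:ℝ) ≤ (σ^2)⁻¹ := by positivity
    rw [hwdef]
    simp only
    rw [norm_smul, Real.norm_eq_abs, abs_mul, abs_mul, abs_neg, abs_inv,
      abs_of_nonneg (hp_nonneg m), abs_of_nonneg hg0, abs_of_nonneg (sq_nonneg σ)]
    nlinarith [mul_le_mul_of_nonneg_left h1 (mul_nonneg (hp_nonneg m) hinv),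
      mul_nonneg (hp_nonneg m) hinv]
  have hwint : ∀ x', Integrable (w x') volume := fun x' =>
    ((hp_int.const_mul (A * (2*σ) * (σ^2)⁻¹)).mono' (hwmeas x')
      (Filter.Eventually.of_forall fun m => hwbound x' m))
  have hderiv : HasFDerivAt (fun x' => ∫ m, p m * gaussDens d σ (x' - m))
      (∫ m, (InnerProductSpace.toDual ℝ _) (w x m)) x := by
    apply hasFDerivAt_integral_of_dominated_of_fderiv_le (s := Metric.ball x 1) (Metric.ball_mem_nhds x one_pos)
      (F := fun x' m => p m * gaussDens d σ (x' - m))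
      (F' := fun x' m => (InnerProductSpace.toDual ℝ _) (w x' m))
      (bound := fun m => (A * (2*σ) * (σ^2)⁻¹) * p m)
    · exact Filter.Eventually.of_forall fun x' => hFmeas x'
    · apply (hp_int.const_mul A).mono' (hFmeas x)
      filter_upwards with m
      rw [Real.norm_eq_abs, abs_mul, abs_of_nonneg (hp_nonneg m),
        abs_of_nonneg (gauss_nonneg hσ _)]
      have := mul_le_mul_of_nonneg_left (gauss_le hσ (u := x - m)) (hp_nonneg m)
      linarith [this]
    · exact (InnerProductSpace.toDual ℝ _).continuous.comp_aestronglyMeasurable (hwmeas x)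
    · filter_upwards with m
      intro x' _
      rw [LinearIsometryEquiv.norm_map]
      exact hwbound x' m
    · exact hp_int.const_mul _
    · filter_upwards with m
      intro x' _
      exact integrand_fderiv hσ (p m) m x'
  have hFint' : Integrable (fun m => (InnerProductSpace.toDual ℝ _) (w x m)) volume := by
    apply ((hp_int.const_mul (A * (2*σ) * (σ^2)⁻¹)).mono'
      ((InnerProductSpace.toDual ℝ _).continuous.comp_aestronglyMeasurable (hwmeas x)))
    filter_upwards with m
    rw [LinearIsometryEquiv.norm_map]
    exact hwbound x m
  have hcomm : (∫ m, (InnerProductSpace.toDual ℝ _) (w x m)) =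
      (InnerProductSpace.toDual ℝ _) (∫ m, w x m) := by
    refine ContinuousLinearMap.ext fun y => ?_
    rw [ContinuousLinearMap.integral_apply hFint']
    simp only [InnerProductSpace.toDual_apply_apply]
    calc ∫ m, (inner ℝ (w x m) y : ℝ) = ∫ m, (innerSL ℝ y) (w x m) := by
          simp only [innerSL_apply_apply]
          congr 1
          funext m
          exact real_inner_comm _ _
      _ = (innerSL ℝ y) (∫ m, w x m) :=
          ContinuousLinearMap.integral_comp_comm _ (hwint x)
      _ = (inner ℝ (∫ m, w x m) y : ℝ) := by
          simp only [innerSL_apply_apply]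
          exact real_inner_comm _ _
  have hρderiv : HasFDerivAt ρ ((InnerProductSpace.toDual ℝ _) (∫ m, w x m)) x := by
    have hfun : ρ = fun x' => ∫ m, p m * gaussDens d σ (x' - m) := funext hρ
    rw [hfun]
    exact hcomm ▸ hderiv
  have hlog : HasGradientAt (fun x' => Real.log (ρ x')) ((ρ x)⁻¹ • ∫ m, w x m) x := by
    rw [hasGradientAt_iff_hasFDerivAt]
    have h := (Real.hasDerivAt_log (ne_of_gt hρx)).comp_hasFDerivAt x hρderiv
    have heq : (InnerProductSpace.toDual ℝ _) ((ρ x)⁻¹ • ∫ m, w x m) =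
        (ρ x)⁻¹ • (InnerProductSpace.toDual ℝ _) (∫ m, w x m) := map_smul _ _ _
    rw [heq]
    exact h
  rw [hlog.gradient, hcondExpZ x]
  rw [smul_comm (-(γ s)⁻¹) ((ρ x)⁻¹)]
  congr 1
  rw [← integral_smul]
  congr 1
  funext m
  rw [hwdef]
  simp only
  rw [smul_smul, smul_smul]
  congr 1
  rw [sq, mul_inv]
  ring
end

section
/- If Y = μ + σ Z where μ is a random vector in ℝ^d with density p, Z ~ N(0, I_d) independent of μ, and σ > 0, then the density q of Y satisfies ∇ log q(y) = −σ^{-1} E[Z | Y = y]. -/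
set_option synthInstance.maxHeartbeats 1000000
set_option maxHeartbeats 1000000

open MeasureTheory Real

lemma exp_mul_le_sigma (σ : ℝ) (hσ : 0 < σ) (t : ℝ) :
    Real.exp (-t^2 / (2*σ^2)) * t ≤ σ := by
  have h1 : (t/σ)^2/2 + 1 ≤ Real.exp ((t/σ)^2/2) := Real.add_one_le_exp _
  have h3 : t ≤ σ * Real.exp (t^2/(2*σ^2)) := by
    have he : t^2/(2*σ^2) = (t/σ)^2/2 := by rw [div_pow, div_div]; congr 1; ring
    rw [he]
    calc t = σ * (t/σ) := by field_simp
    _ ≤ σ * ((t/σ)^2/2 + 1) := by nlinarith [sq_nonneg (t/σ - 1)]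
    _ ≤ σ * Real.exp ((t/σ)^2/2) := by nlinarith [h1]
  have h4 : Real.exp (-t^2/(2*σ^2)) = (Real.exp (t^2/(2*σ^2)))⁻¹ := by
    rw [← Real.exp_neg]; ring_nf
  rw [h4]
  have hep := Real.exp_pos (t^2/(2*σ^2))
  rw [inv_mul_le_iff₀ hep]
  linarith [h3]

lemma hasFDerivAt_gaussDens {d : ℕ} {σ : ℝ} (hσ : 0 < σ) (x : EuclideanSpace ℝ (Fin d)) :
    HasFDerivAt (gaussDens d σ) ((gaussDens d σ x * -(σ^2)⁻¹) • innerSL ℝ x) x := by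
  have h1 : HasFDerivAt (fun x : EuclideanSpace ℝ (Fin d) => ‖x‖^2) (2 • innerSL ℝ x) x := by
    simpa using (hasFDerivAt_id x).norm_sq
  have h2 : HasFDerivAt (fun x : EuclideanSpace ℝ (Fin d) => -‖x‖^2 / (2*σ^2))
      (-(σ^2)⁻¹ • innerSL ℝ x) x := by
    have h := h1.const_mul (-(2*σ^2)⁻¹)
    have heq : (fun x : EuclideanSpace ℝ (Fin d) => -(2*σ^2)⁻¹ * ‖x‖^2)
        = (fun x : EuclideanSpace ℝ (Fin d) => -‖x‖^2 / (2*σ^2)) := by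
      funext z; field_simp
    rw [heq] at h
    refine h.congr_fderiv ?_
    ext v
    simp only [ContinuousLinearMap.smul_apply, smul_eq_mul]
    ring
  have h3 := h2.exp
  have h4 := h3.const_mul ((2 * π * σ^2) ^ (-(d:ℝ)/2))
  refine h4.congr_fderiv ?_
  ext v
  simp only [gaussDens, ContinuousLinearMap.smul_apply, smul_eq_mul]
  ring

/-- if `Y = μ + σZ` with `μ` having density `p`, `Z ~ N(0, I_d)` independent of
`μ` and `σ > 0`, then the density `q(y) = ∫ p(m) φ_σ(y−m) dm` of `Y` satisfies the
Gaussian-smoothing score identity `∇ log q(y) = −σ⁻¹ E[Z | Y = y]`, where the conditional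
expectation `E[Z | Y = y]` is the regression function
`(q y)⁻¹ • ∫ (p m φ_σ(y−m)) • σ⁻¹(y−m) dm` (under the joint law of `(μ, Z)`,
`Z = σ⁻¹(Y − μ)`). -/
theorem score_of_gaussian_smoothing
    {d : ℕ} (σ : ℝ) (hσ : 0 < σ)
    (p : EuclideanSpace ℝ (Fin d) → ℝ)
    (hp_nonneg : ∀ m, 0 ≤ p m) (hp_int : Integrable p)
    (hp_prob : ∫ m, p m = 1)
    (q : EuclideanSpace ℝ (Fin d) → ℝ)
    (hq : ∀ y, q y = ∫ m, p m * gaussDens d σ (y - m))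
    (condExpZ : EuclideanSpace ℝ (Fin d) → EuclideanSpace ℝ (Fin d))
    (hcondExpZ : ∀ y, condExpZ y =
      (q y)⁻¹ • ∫ m, (p m * gaussDens d σ (y - m)) • (σ⁻¹ • (y - m)))
    (y : EuclideanSpace ℝ (Fin d)) (hqy : 0 < q y) :
    gradient (fun y' => Real.log (q y')) y = -σ⁻¹ • condExpZ y := by
  set c := (2 * π * σ^2) ^ (-(d:ℝ)/2) with hc
  have hσ2 : (0:ℝ) < σ^2 := by positivity
  have hc_pos : 0 < c := by
    rw [hc]
    apply Real.rpow_pos_of_pos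
    positivity
  have hφ_cont : Continuous (gaussDens d σ) := by
    unfold gaussDens; fun_prop
  have hφ_pos : ∀ x : EuclideanSpace ℝ (Fin d), 0 < gaussDens d σ x := fun x => by
    unfold gaussDens; positivity
  have hφ_le : ∀ x : EuclideanSpace ℝ (Fin d), gaussDens d σ x ≤ c := by
    intro x
    have h1 : Real.exp (-‖x‖^2/(2*σ^2)) ≤ 1 := by
      rw [Real.exp_le_one_iff]
      have hx := sq_nonneg ‖x‖
      have h2σ : (0:ℝ) < 2*σ^2 := by positivity
      exact div_nonpos_of_nonpos_of_nonneg (by linarith) h2σ.le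
    have := Real.exp_pos (-‖x‖^2/(2*σ^2))
    unfold gaussDens
    nlinarith [hc_pos]
  have hkey : ∀ x : EuclideanSpace ℝ (Fin d),
      gaussDens d σ x * ((σ^2)⁻¹ * ‖x‖) ≤ c / σ := by
    intro x
    have h := exp_mul_le_sigma σ hσ ‖x‖
    unfold gaussDens
    have h2 : c * Real.exp (-‖x‖^2/(2*σ^2)) * ((σ^2)⁻¹ * ‖x‖)
        = c * (Real.exp (-‖x‖^2/(2*σ^2)) * ‖x‖) * (σ^2)⁻¹ := by ring
    rw [h2]
    have h3 : c * (Real.exp (-‖x‖^2/(2*σ^2)) * ‖x‖) * (σ^2)⁻¹ ≤ c * σ * (σ^2)⁻¹ := by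
      apply mul_le_mul_of_nonneg_right (mul_le_mul_of_nonneg_left h hc_pos.le) (by positivity)
    have h4 : c * σ * (σ^2)⁻¹ = c / σ := by
      field_simp
    linarith
  have hφm_meas : ∀ y' : EuclideanSpace ℝ (Fin d),
      AEStronglyMeasurable (fun m : EuclideanSpace ℝ (Fin d) => p m * gaussDens d σ (y' - m))
        volume := fun y' =>
    hp_int.aestronglyMeasurable.mul
      ((hφ_cont.comp (continuous_const.sub continuous_id)).aestronglyMeasurable)
  have hFy_int : Integrable (fun m => p m * gaussDens d σ (y - m)) := by
    apply Integrable.mono' (hp_int.const_mul c) (hφm_meas y)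
    apply ae_of_all
    intro m
    rw [Real.norm_eq_abs, abs_mul, abs_of_nonneg (hp_nonneg m), abs_of_nonneg (hφ_pos _).le]
    nlinarith [hφ_le (y - m), hp_nonneg m, (hφ_pos (y - m)).le]
  have hderiv : ∀ (m y' : EuclideanSpace ℝ (Fin d)),
      HasFDerivAt (fun z => p m * gaussDens d σ (z - m))
        ((p m * gaussDens d σ (y' - m) * -(σ^2)⁻¹) • innerSL ℝ (y' - m)) y' := by
    intro m y'
    have h1 : HasFDerivAt (fun z : EuclideanSpace ℝ (Fin d) => z - m)
        (ContinuousLinearMap.id ℝ (EuclideanSpace ℝ (Fin d))) y' :=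
      (hasFDerivAt_id y').sub_const m
    have h2 := (hasFDerivAt_gaussDens hσ (y' - m)).comp y' h1
    have h3 := h2.const_mul (p m)
    refine h3.congr_fderiv ?_
    ext v
    simp only [ContinuousLinearMap.smul_apply, ContinuousLinearMap.coe_comp',
      Function.comp_apply, ContinuousLinearMap.coe_id', id_eq, smul_eq_mul]
    ring
  have habs : ∀ (m x : EuclideanSpace ℝ (Fin d)), |p m * gaussDens d σ x * -(σ^2)⁻¹|
      = p m * (gaussDens d σ x * (σ^2)⁻¹) := by
    intro m x
    rw [abs_mul, abs_mul, abs_of_nonneg (hp_nonneg m), abs_of_nonneg (hφ_pos _).le, abs_neg,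
      abs_of_nonneg (by positivity : (0:ℝ) ≤ (σ^2)⁻¹)]
    ring
  set G : EuclideanSpace ℝ (Fin d) :=
    ∫ m, (p m * gaussDens d σ (y - m) * -(σ^2)⁻¹) • (y - m) with hG
  have hg_meas : AEStronglyMeasurable
      (fun m : EuclideanSpace ℝ (Fin d) =>
        (p m * gaussDens d σ (y - m) * -(σ^2)⁻¹) • (y - m)) volume :=
    ((hφm_meas y).mul aestronglyMeasurable_const).smul
      (continuous_const.sub continuous_id).aestronglyMeasurable
  have hg_bound : ∀ m, ‖(p m * gaussDens d σ (y - m) * -(σ^2)⁻¹) • (y - m)‖ ≤ c/σ * p m := by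
    intro m
    rw [norm_smul, Real.norm_eq_abs, habs m]
    nlinarith [hkey (y - m), hp_nonneg m, norm_nonneg (y - m), (hφ_pos (y - m)).le]
  have hg_int : Integrable
      (fun m => (p m * gaussDens d σ (y - m) * -(σ^2)⁻¹) • (y - m)) :=
    Integrable.mono' (hp_int.const_mul (c/σ)) hg_meas (ae_of_all _ hg_bound)
  have hq_deriv : HasFDerivAt (fun y' => ∫ m, p m * gaussDens d σ (y' - m))
      (∫ m, (p m * gaussDens d σ (y - m) * -(σ^2)⁻¹) • innerSL ℝ (y - m)) y := by
    apply hasFDerivAt_integral_of_dominated_of_fderiv_le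
      (bound := fun m => c/σ * p m)
      (F' := fun y' m => (p m * gaussDens d σ (y' - m) * -(σ^2)⁻¹) • innerSL ℝ (y' - m))
      (Metric.ball_mem_nhds y one_pos)
    · exact Filter.Eventually.of_forall fun y' => hφm_meas y'
    · exact hFy_int
    · exact ((hφm_meas y).mul aestronglyMeasurable_const).smul
        ((innerSL ℝ).continuous.comp (continuous_const.sub continuous_id)).aestronglyMeasurable
    · apply ae_of_all
      intro m y' _
      rw [norm_smul _ (innerSL ℝ (y' - m)), innerSL_apply_norm, Real.norm_eq_abs, habs m]
      nlinarith [hkey (y' - m), hp_nonneg m, norm_nonneg (y' - m), (hφ_pos (y' - m)).le]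
    · exact hp_int.const_mul (c/σ)
    · exact ae_of_all _ fun m y' _ => hderiv m y'
  have hqe : q = fun y' => ∫ m, p m * gaussDens d σ (y' - m) := funext hq
  have hint_eq : (∫ m, (p m * gaussDens d σ (y - m) * -(σ^2)⁻¹) • innerSL ℝ (y - m))
      = innerSL ℝ G := by
    rw [hG, ← ContinuousLinearMap.integral_comp_comm (innerSL ℝ) hg_int]
    congr 1
    funext m
    exact ((innerSL ℝ).map_smul _ _).symm
  have hq_deriv' : HasFDerivAt q (innerSL ℝ G) y := by
    rw [hqe, ← hint_eq]
    exact hq_deriv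
  have hlog : HasDerivAt Real.log (q y)⁻¹ (q y) := Real.hasDerivAt_log (ne_of_gt hqy)
  have hcomp : HasFDerivAt (fun y' => Real.log (q y')) ((q y)⁻¹ • innerSL ℝ G) y :=
    hlog.comp_hasFDerivAt y hq_deriv'
  have hgrad : HasGradientAt (fun y' => Real.log (q y')) ((q y)⁻¹ • G) y := by
    rw [hasGradientAt_iff_hasFDerivAt]
    refine hcomp.congr_fderiv ?_
    ext v
    simp [InnerProductSpace.toDual_apply_apply, real_inner_smul_left,
      ContinuousLinearMap.smul_apply, innerSL_apply_apply]
  rw [hgrad.gradient, hcondExpZ, smul_comm]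
  congr 1
  rw [← integral_smul]
  rw [hG]
  congr 1
  funext m
  rw [smul_smul, smul_smul]
  congr 1
  ring
end
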